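/- For every pair s = (s¹, s²) of vectors in ℂ⁴ and each A ∈ {1,2}, Clifford multiplication by the Dirac current reproduces the spinor up to the scalar bilinear: Σ_μ κ_{s,μ} Γ^μ sᴬ = μ_s sᴬ. -/

import Mathlib

open Matrix

noncomputable section

/-- The mostly-minus Minkowski metric η = diag(1,−1,−1,−1,−1) (equal to its own inverse). -/
def eta (μ ν : Fin 5) : ℂ := if μ = ν then (if μ = 0 then 1 else -1) else 0

/-- Γ_{μν} := (1/2)(Γ_μ Γ_ν − Γ_ν Γ_μ). -/
def comm2 (Γ : Fin 5 → Matrix (Fin 4) (Fin 4) ℂ) (μ ν : Fin 5) : Matrix (Fin 4) (Fin 4) ℂ :=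
  (1/2 : ℂ) • (Γ μ * Γ ν - Γ ν * Γ μ)

/-- s̄₁ s₂ := s₁ᵀ C s₂. -/
def bil (Cm : Matrix (Fin 4) (Fin 4) ℂ) (s₁ s₂ : Fin 4 → ℂ) : ℂ := s₁ ⬝ᵥ Cm *ᵥ s₂

/-- s̄₁ M s₂ := s₁ᵀ C M s₂. -/
def bilM (Cm M : Matrix (Fin 4) (Fin 4) ℂ) (s₁ s₂ : Fin 4 → ℂ) : ℂ := s₁ ⬝ᵥ Cm *ᵥ M *ᵥ s₂

/-- The 2×2 symplectic form ε with ε_{12} = 1 (indices 0,1 standing for 1,2). -/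
def eps2 (A B : Fin 2) : ℂ := if A = 0 ∧ B = 1 then 1 else if A = 1 ∧ B = 0 then -1 else 0

/-- The scalar bilinear μ_s := ε_{AB} s̄ᴬ sᴮ. -/
def muS (Cm : Matrix (Fin 4) (Fin 4) ℂ) (s : Fin 2 → Fin 4 → ℂ) : ℂ :=
  ∑ A, ∑ B, eps2 A B * bil Cm (s A) (s B)

/-- The Dirac current with lowered index, κ_{s,μ} := ε_{AB} s̄ᴬ Γ_μ sᴮ. -/
def kappaLow (Γ : Fin 5 → Matrix (Fin 4) (Fin 4) ℂ) (Cm : Matrix (Fin 4) (Fin 4) ℂ)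
    (s : Fin 2 → Fin 4 → ℂ) (μ : Fin 5) : ℂ :=
  ∑ A, ∑ B, eps2 A B * bilM Cm (Γ μ) (s A) (s B)

/-- The Dirac current with raised index, κ_s^μ := η^{μμ} κ_{s,μ} = ε_{AB} s̄ᴬ Γ^μ sᴮ. -/
def kappaUp (Γ : Fin 5 → Matrix (Fin 4) (Fin 4) ℂ) (Cm : Matrix (Fin 4) (Fin 4) ℂ)
    (s : Fin 2 → Fin 4 → ℂ) (μ : Fin 5) : ℂ :=
  eta μ μ * kappaLow Γ Cm s μ

/-- The 2-form bilinears ω^{AB}_{μν} := s̄ᴬ Γ_{μν} sᴮ. -/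
def omegaS (Γ : Fin 5 → Matrix (Fin 4) (Fin 4) ℂ) (Cm : Matrix (Fin 4) (Fin 4) ℂ)
    (s : Fin 2 → Fin 4 → ℂ) (A B : Fin 2) (μ ν : Fin 5) : ℂ :=
  bilM Cm (comm2 Γ μ ν) (s A) (s B)

/-! ### Auxiliary development -/

abbrev Mx := Matrix (Fin 4) (Fin 4) ℂ

def bas (Γ : Fin 5 → Mx) : Fin 16 → Mx :=
![1, Γ 0, Γ 1, Γ 2, Γ 3, Γ 4,
  Γ 0*Γ 1, Γ 0*Γ 2, Γ 0*Γ 3, Γ 0*Γ 4, Γ 1*Γ 2, Γ 1*Γ 3, Γ 1*Γ 4, Γ 2*Γ 3, Γ 2*Γ 4, Γ 3*Γ 4]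
def dua (Γ : Fin 5 → Mx) : Fin 16 → Mx :=
![1, Γ 0, -Γ 1, -Γ 2, -Γ 3, -Γ 4,
  -(Γ 1*Γ 0), -(Γ 2*Γ 0), -(Γ 3*Γ 0), -(Γ 4*Γ 0),
  Γ 2*Γ 1, Γ 3*Γ 1, Γ 4*Γ 1, Γ 3*Γ 2, Γ 4*Γ 2, Γ 4*Γ 3]

def ACm (a b : Mx) : Prop := a * b = -(b * a)
def COm (a b : Mx) : Prop := a * b = b * a
lemma ACm.mul_co {a x y : Mx} (h1 : ACm a x) (h2 : COm a y) : ACm a (x * y) := by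
  unfold ACm COm at *
  rw [← mul_assoc, h1, neg_mul, mul_assoc, h2, ← mul_assoc]
lemma COm.mul_ac {a x y : Mx} (h1 : COm a x) (h2 : ACm a y) : ACm a (x * y) := by
  unfold ACm COm at *
  rw [← mul_assoc, h1, mul_assoc, h2, mul_neg, ← mul_assoc]
lemma COm.mul_co {a x y : Mx} (h1 : COm a x) (h2 : COm a y) : COm a (x * y) := by
  unfold COm at *
  rw [← mul_assoc, h1, mul_assoc, h2, ← mul_assoc]
lemma ACm.mul_ac {a x y : Mx} (h1 : ACm a x) (h2 : ACm a y) : COm a (x * y) := by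
  unfold ACm COm at *
  rw [← mul_assoc, h1, neg_mul, mul_assoc, h2, mul_neg, neg_neg, ← mul_assoc]
lemma ACm.neg {a x : Mx} (h : ACm a x) : ACm a (-x) := by
  unfold ACm at *; rw [mul_neg, h, neg_mul]
lemma COm.neg {a x : Mx} (h : COm a x) : COm a (-x) := by
  unfold COm at *; rw [mul_neg, h, neg_mul]
lemma COm.refl (a : Mx) : COm a a := rfl
lemma COm.one (a : Mx) : COm a 1 := by unfold COm; rw [mul_one, one_mul]

lemma eta_ne (μ : Fin 5) : eta μ μ ≠ 0 := by
  fin_cases μ <;> simp [eta]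

lemma sum16 {V : Type*} [AddCommMonoid V] (f : Fin 16 → V) :
    ∑ i, f i = f 0 + f 1 + f 2 + f 3 + f 4 + f 5 + f 6 + f 7
      + f 8 + f 9 + f 10 + f 11 + f 12 + f 13 + f 14 + f 15 := by
  rw [Fin.sum_univ_castSucc, Fin.sum_univ_castSucc, Fin.sum_univ_castSucc,
    Fin.sum_univ_castSucc, Fin.sum_univ_castSucc, Fin.sum_univ_castSucc,
    Fin.sum_univ_castSucc, Fin.sum_univ_castSucc, Fin.sum_univ_eight]
  rfl


section withGamma
variable (Γ : Fin 5 → Mx)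
  (hC : ∀ μ ν, Γ μ * Γ ν + Γ ν * Γ μ = (2 * eta μ ν) • (1 : Mx))
include hC

lemma gsq (μ : Fin 5) : Γ μ * Γ μ = eta μ μ • 1 := by
  have h := hC μ μ
  rw [mul_smul, ← two_smul ℂ (Γ μ * Γ μ)] at h
  exact smul_right_injective _ (two_ne_zero) h

lemma ganti {μ ν : Fin 5} (h : μ ≠ ν) : ACm (Γ μ) (Γ ν) := by
  have h2 := hC μ ν
  unfold ACm
  rw [eta, if_neg h] at h2
  simp only [mul_zero, zero_smul] at h2
  linear_combination (norm := noncomm_ring) h2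

lemma traceless {μ : Fin 5} {X : Mx} (h : ACm (Γ μ) X) : trace X = 0 := by
  have hsq := gsq Γ hC μ
  have h1 : trace (Γ μ * X * Γ μ) = eta μ μ * trace X := by
    rw [trace_mul_comm, ← mul_assoc, hsq, smul_mul_assoc, one_mul, trace_smul, smul_eq_mul]
  have h2 : trace (Γ μ * X * Γ μ) = -(eta μ μ * trace X) := by
    rw [h, neg_mul, mul_assoc, hsq, mul_smul_comm, mul_one, trace_neg, trace_smul, smul_eq_mul]
  have h3 : eta μ μ * trace X = 0 := by
    have h4 := h1.symm.trans h2
    linear_combination (1/2 : ℂ) * h4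
  exact (mul_eq_zero.mp h3).resolve_left (eta_ne μ)

set_option maxHeartbeats 2000000 in
lemma orth (i j : Fin 16) :
    trace (dua Γ i * bas Γ j) = if i = j then 4 else 0 := by
  have a01 : ACm (Γ 0) (Γ 1) := ganti Γ hC (by decide)
  have a02 : ACm (Γ 0) (Γ 2) := ganti Γ hC (by decide)
  have a03 : ACm (Γ 0) (Γ 3) := ganti Γ hC (by decide)
  have a04 : ACm (Γ 0) (Γ 4) := ganti Γ hC (by decide)
  have a10 : ACm (Γ 1) (Γ 0) := ganti Γ hC (by decide)
  have a12 : ACm (Γ 1) (Γ 2) := ganti Γ hC (by decide)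
  have a13 : ACm (Γ 1) (Γ 3) := ganti Γ hC (by decide)
  have a14 : ACm (Γ 1) (Γ 4) := ganti Γ hC (by decide)
  have a20 : ACm (Γ 2) (Γ 0) := ganti Γ hC (by decide)
  have a21 : ACm (Γ 2) (Γ 1) := ganti Γ hC (by decide)
  have a23 : ACm (Γ 2) (Γ 3) := ganti Γ hC (by decide)
  have a24 : ACm (Γ 2) (Γ 4) := ganti Γ hC (by decide)
  have a30 : ACm (Γ 3) (Γ 0) := ganti Γ hC (by decide)
  have a31 : ACm (Γ 3) (Γ 1) := ganti Γ hC (by decide)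
  have a32 : ACm (Γ 3) (Γ 2) := ganti Γ hC (by decide)
  have a34 : ACm (Γ 3) (Γ 4) := ganti Γ hC (by decide)
  have a40 : ACm (Γ 4) (Γ 0) := ganti Γ hC (by decide)
  have a41 : ACm (Γ 4) (Γ 1) := ganti Γ hC (by decide)
  have a42 : ACm (Γ 4) (Γ 2) := ganti Γ hC (by decide)
  have a43 : ACm (Γ 4) (Γ 3) := ganti Γ hC (by decide)
  have hs0 : Γ 0 * Γ 0 = 1 := by rw [gsq Γ hC]; simp [eta]
  have hs1 : Γ 1 * Γ 1 = -1 := by rw [gsq Γ hC]; simp [eta]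
  have hs2 : Γ 2 * Γ 2 = -1 := by rw [gsq Γ hC]; simp [eta]
  have hs3 : Γ 3 * Γ 3 = -1 := by rw [gsq Γ hC]; simp [eta]
  have hs4 : Γ 4 * Γ 4 = -1 := by rw [gsq Γ hC]; simp [eta]
  have hs0' : ∀ X : Mx, Γ 0 * (Γ 0 * X) = X := fun X => by rw [← mul_assoc, hs0, one_mul]
  have hs1' : ∀ X : Mx, Γ 1 * (Γ 1 * X) = -X := fun X => by rw [← mul_assoc, hs1]; simp
  have hs2' : ∀ X : Mx, Γ 2 * (Γ 2 * X) = -X := fun X => by rw [← mul_assoc, hs2]; simp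
  have hs3' : ∀ X : Mx, Γ 3 * (Γ 3 * X) = -X := fun X => by rw [← mul_assoc, hs3]; simp
  have hs4' : ∀ X : Mx, Γ 4 * (Γ 4 * X) = -X := fun X => by rw [← mul_assoc, hs4]; simp
  have b0 : bas Γ 0 = 1 := rfl
  have b1 : bas Γ 1 = Γ 0 := rfl
  have b2 : bas Γ 2 = Γ 1 := rfl
  have b3 : bas Γ 3 = Γ 2 := rfl
  have b4 : bas Γ 4 = Γ 3 := rfl
  have b5 : bas Γ 5 = Γ 4 := rfl
  have b6 : bas Γ 6 = Γ 0 * Γ 1 := rfl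
  have b7 : bas Γ 7 = Γ 0 * Γ 2 := rfl
  have b8 : bas Γ 8 = Γ 0 * Γ 3 := rfl
  have b9 : bas Γ 9 = Γ 0 * Γ 4 := rfl
  have b10 : bas Γ 10 = Γ 1 * Γ 2 := rfl
  have b11 : bas Γ 11 = Γ 1 * Γ 3 := rfl
  have b12 : bas Γ 12 = Γ 1 * Γ 4 := rfl
  have b13 : bas Γ 13 = Γ 2 * Γ 3 := rfl
  have b14 : bas Γ 14 = Γ 2 * Γ 4 := rfl
  have b15 : bas Γ 15 = Γ 3 * Γ 4 := rfl
  have d0 : dua Γ 0 = 1 := rfl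
  have d1 : dua Γ 1 = Γ 0 := rfl
  have d2 : dua Γ 2 = -Γ 1 := rfl
  have d3 : dua Γ 3 = -Γ 2 := rfl
  have d4 : dua Γ 4 = -Γ 3 := rfl
  have d5 : dua Γ 5 = -Γ 4 := rfl
  have d6 : dua Γ 6 = -(Γ 1 * Γ 0) := rfl
  have d7 : dua Γ 7 = -(Γ 2 * Γ 0) := rfl
  have d8 : dua Γ 8 = -(Γ 3 * Γ 0) := rfl
  have d9 : dua Γ 9 = -(Γ 4 * Γ 0) := rfl
  have d10 : dua Γ 10 = Γ 2 * Γ 1 := rfl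
  have d11 : dua Γ 11 = Γ 3 * Γ 1 := rfl
  have d12 : dua Γ 12 = Γ 4 * Γ 1 := rfl
  have d13 : dua Γ 13 = Γ 3 * Γ 2 := rfl
  have d14 : dua Γ 14 = Γ 4 * Γ 2 := rfl
  have d15 : dua Γ 15 = Γ 4 * Γ 3 := rfl
  have hneg : ∀ x y : Mx, (-x) * y = -(x * y) := fun x y => neg_mul x y
  rcases eq_or_ne i j with rfl | hne
  · rw [if_pos rfl]
    fin_cases i <;>
      simp [b0,b1,b2,b3,b4,b5,b6,b7,b8,b9,b10,b11,b12,b13,b14,b15,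
        d0,d1,d2,d3,d4,d5,d6,d7,d8,d9,d10,d11,d12,d13,d14,d15,
        mul_assoc, hs0, hs1, hs2, hs3, hs4, hs0', hs1', hs2', hs3', hs4',
        Matrix.trace_neg, Matrix.trace_one]
  · rw [if_neg hne]
    fin_cases i <;> fin_cases j
    · exact absurd rfl hne
    · exact traceless Γ hC (μ := 1) (COm.mul_ac (COm.one _) a10)
    · exact traceless Γ hC (μ := 0) (COm.mul_ac (COm.one _) a01)
    · exact traceless Γ hC (μ := 0) (COm.mul_ac (COm.one _) a02)
    · exact traceless Γ hC (μ := 0) (COm.mul_ac (COm.one _) a03)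
    · exact traceless Γ hC (μ := 0) (COm.mul_ac (COm.one _) a04)
    · exact traceless Γ hC (μ := 0) (COm.mul_ac (COm.one _) (COm.mul_ac (COm.refl (Γ 0)) a01))
    · exact traceless Γ hC (μ := 0) (COm.mul_ac (COm.one _) (COm.mul_ac (COm.refl (Γ 0)) a02))
    · exact traceless Γ hC (μ := 0) (COm.mul_ac (COm.one _) (COm.mul_ac (COm.refl (Γ 0)) a03))
    · exact traceless Γ hC (μ := 0) (COm.mul_ac (COm.one _) (COm.mul_ac (COm.refl (Γ 0)) a04))
    · exact traceless Γ hC (μ := 1) (COm.mul_ac (COm.one _) (COm.mul_ac (COm.refl (Γ 1)) a12))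
    · exact traceless Γ hC (μ := 1) (COm.mul_ac (COm.one _) (COm.mul_ac (COm.refl (Γ 1)) a13))
    · exact traceless Γ hC (μ := 1) (COm.mul_ac (COm.one _) (COm.mul_ac (COm.refl (Γ 1)) a14))
    · exact traceless Γ hC (μ := 2) (COm.mul_ac (COm.one _) (COm.mul_ac (COm.refl (Γ 2)) a23))
    · exact traceless Γ hC (μ := 2) (COm.mul_ac (COm.one _) (COm.mul_ac (COm.refl (Γ 2)) a24))
    · exact traceless Γ hC (μ := 3) (COm.mul_ac (COm.one _) (COm.mul_ac (COm.refl (Γ 3)) a34))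
    · exact traceless Γ hC (μ := 1) (ACm.mul_co a10 (COm.one _))
    · exact absurd rfl hne
    · exact traceless Γ hC (μ := 0) (COm.mul_ac (COm.refl (Γ 0)) a01)
    · exact traceless Γ hC (μ := 0) (COm.mul_ac (COm.refl (Γ 0)) a02)
    · exact traceless Γ hC (μ := 0) (COm.mul_ac (COm.refl (Γ 0)) a03)
    · exact traceless Γ hC (μ := 0) (COm.mul_ac (COm.refl (Γ 0)) a04)
    · exact traceless Γ hC (μ := 0) (COm.mul_ac (COm.refl (Γ 0)) (COm.mul_ac (COm.refl (Γ 0)) a01))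
    · exact traceless Γ hC (μ := 0) (COm.mul_ac (COm.refl (Γ 0)) (COm.mul_ac (COm.refl (Γ 0)) a02))
    · exact traceless Γ hC (μ := 0) (COm.mul_ac (COm.refl (Γ 0)) (COm.mul_ac (COm.refl (Γ 0)) a03))
    · exact traceless Γ hC (μ := 0) (COm.mul_ac (COm.refl (Γ 0)) (COm.mul_ac (COm.refl (Γ 0)) a04))
    · exact traceless Γ hC (μ := 3) (ACm.mul_co a30 (ACm.mul_ac a31 a32))
    · exact traceless Γ hC (μ := 2) (ACm.mul_co a20 (ACm.mul_ac a21 a23))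
    · exact traceless Γ hC (μ := 2) (ACm.mul_co a20 (ACm.mul_ac a21 a24))
    · exact traceless Γ hC (μ := 1) (ACm.mul_co a10 (ACm.mul_ac a12 a13))
    · exact traceless Γ hC (μ := 1) (ACm.mul_co a10 (ACm.mul_ac a12 a14))
    · exact traceless Γ hC (μ := 1) (ACm.mul_co a10 (ACm.mul_ac a13 a14))
    · exact traceless Γ hC (μ := 0) (ACm.mul_co (ACm.neg a01) (COm.one _))
    · exact traceless Γ hC (μ := 0) (ACm.mul_co (ACm.neg a01) (COm.refl (Γ 0)))
    · exact absurd rfl hne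
    · exact traceless Γ hC (μ := 1) (COm.mul_ac (COm.neg (COm.refl (Γ 1))) a12)
    · exact traceless Γ hC (μ := 1) (COm.mul_ac (COm.neg (COm.refl (Γ 1))) a13)
    · exact traceless Γ hC (μ := 1) (COm.mul_ac (COm.neg (COm.refl (Γ 1))) a14)
    · exact traceless Γ hC (μ := 1) (COm.mul_ac (COm.neg (COm.refl (Γ 1))) (ACm.mul_co a10 (COm.refl (Γ 1))))
    · exact traceless Γ hC (μ := 3) (ACm.mul_co (ACm.neg a31) (ACm.mul_ac a30 a32))
    · exact traceless Γ hC (μ := 2) (ACm.mul_co (ACm.neg a21) (ACm.mul_ac a20 a23))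
    · exact traceless Γ hC (μ := 2) (ACm.mul_co (ACm.neg a21) (ACm.mul_ac a20 a24))
    · exact traceless Γ hC (μ := 0) (ACm.mul_co (ACm.neg a01) (ACm.mul_ac a01 a02))
    · exact traceless Γ hC (μ := 0) (ACm.mul_co (ACm.neg a01) (ACm.mul_ac a01 a03))
    · exact traceless Γ hC (μ := 0) (ACm.mul_co (ACm.neg a01) (ACm.mul_ac a01 a04))
    · exact traceless Γ hC (μ := 0) (ACm.mul_co (ACm.neg a01) (ACm.mul_ac a02 a03))
    · exact traceless Γ hC (μ := 0) (ACm.mul_co (ACm.neg a01) (ACm.mul_ac a02 a04))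
    · exact traceless Γ hC (μ := 0) (ACm.mul_co (ACm.neg a01) (ACm.mul_ac a03 a04))
    · exact traceless Γ hC (μ := 0) (ACm.mul_co (ACm.neg a02) (COm.one _))
    · exact traceless Γ hC (μ := 0) (ACm.mul_co (ACm.neg a02) (COm.refl (Γ 0)))
    · exact traceless Γ hC (μ := 1) (ACm.mul_co (ACm.neg a12) (COm.refl (Γ 1)))
    · exact absurd rfl hne
    · exact traceless Γ hC (μ := 2) (COm.mul_ac (COm.neg (COm.refl (Γ 2))) a23)
    · exact traceless Γ hC (μ := 2) (COm.mul_ac (COm.neg (COm.refl (Γ 2))) a24)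
    · exact traceless Γ hC (μ := 3) (ACm.mul_co (ACm.neg a32) (ACm.mul_ac a30 a31))
    · exact traceless Γ hC (μ := 1) (ACm.mul_co (ACm.neg a12) (ACm.mul_ac a10 a12))
    · exact traceless Γ hC (μ := 1) (ACm.mul_co (ACm.neg a12) (ACm.mul_ac a10 a13))
    · exact traceless Γ hC (μ := 1) (ACm.mul_co (ACm.neg a12) (ACm.mul_ac a10 a14))
    · exact traceless Γ hC (μ := 0) (ACm.mul_co (ACm.neg a02) (ACm.mul_ac a01 a02))
    · exact traceless Γ hC (μ := 0) (ACm.mul_co (ACm.neg a02) (ACm.mul_ac a01 a03))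
    · exact traceless Γ hC (μ := 0) (ACm.mul_co (ACm.neg a02) (ACm.mul_ac a01 a04))
    · exact traceless Γ hC (μ := 0) (ACm.mul_co (ACm.neg a02) (ACm.mul_ac a02 a03))
    · exact traceless Γ hC (μ := 0) (ACm.mul_co (ACm.neg a02) (ACm.mul_ac a02 a04))
    · exact traceless Γ hC (μ := 0) (ACm.mul_co (ACm.neg a02) (ACm.mul_ac a03 a04))
    · exact traceless Γ hC (μ := 0) (ACm.mul_co (ACm.neg a03) (COm.one _))
    · exact traceless Γ hC (μ := 0) (ACm.mul_co (ACm.neg a03) (COm.refl (Γ 0)))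
    · exact traceless Γ hC (μ := 1) (ACm.mul_co (ACm.neg a13) (COm.refl (Γ 1)))
    · exact traceless Γ hC (μ := 2) (ACm.mul_co (ACm.neg a23) (COm.refl (Γ 2)))
    · exact absurd rfl hne
    · exact traceless Γ hC (μ := 3) (COm.mul_ac (COm.neg (COm.refl (Γ 3))) a34)
    · exact traceless Γ hC (μ := 2) (ACm.mul_co (ACm.neg a23) (ACm.mul_ac a20 a21))
    · exact traceless Γ hC (μ := 1) (ACm.mul_co (ACm.neg a13) (ACm.mul_ac a10 a12))
    · exact traceless Γ hC (μ := 1) (ACm.mul_co (ACm.neg a13) (ACm.mul_ac a10 a13))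
    · exact traceless Γ hC (μ := 1) (ACm.mul_co (ACm.neg a13) (ACm.mul_ac a10 a14))
    · exact traceless Γ hC (μ := 0) (ACm.mul_co (ACm.neg a03) (ACm.mul_ac a01 a02))
    · exact traceless Γ hC (μ := 0) (ACm.mul_co (ACm.neg a03) (ACm.mul_ac a01 a03))
    · exact traceless Γ hC (μ := 0) (ACm.mul_co (ACm.neg a03) (ACm.mul_ac a01 a04))
    · exact traceless Γ hC (μ := 0) (ACm.mul_co (ACm.neg a03) (ACm.mul_ac a02 a03))
    · exact traceless Γ hC (μ := 0) (ACm.mul_co (ACm.neg a03) (ACm.mul_ac a02 a04))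
    · exact traceless Γ hC (μ := 0) (ACm.mul_co (ACm.neg a03) (ACm.mul_ac a03 a04))
    · exact traceless Γ hC (μ := 0) (ACm.mul_co (ACm.neg a04) (COm.one _))
    · exact traceless Γ hC (μ := 0) (ACm.mul_co (ACm.neg a04) (COm.refl (Γ 0)))
    · exact traceless Γ hC (μ := 1) (ACm.mul_co (ACm.neg a14) (COm.refl (Γ 1)))
    · exact traceless Γ hC (μ := 2) (ACm.mul_co (ACm.neg a24) (COm.refl (Γ 2)))
    · exact traceless Γ hC (μ := 3) (ACm.mul_co (ACm.neg a34) (COm.refl (Γ 3)))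
    · exact absurd rfl hne
    · exact traceless Γ hC (μ := 2) (ACm.mul_co (ACm.neg a24) (ACm.mul_ac a20 a21))
    · exact traceless Γ hC (μ := 1) (ACm.mul_co (ACm.neg a14) (ACm.mul_ac a10 a12))
    · exact traceless Γ hC (μ := 1) (ACm.mul_co (ACm.neg a14) (ACm.mul_ac a10 a13))
    · exact traceless Γ hC (μ := 1) (ACm.mul_co (ACm.neg a14) (ACm.mul_ac a10 a14))
    · exact traceless Γ hC (μ := 0) (ACm.mul_co (ACm.neg a04) (ACm.mul_ac a01 a02))
    · exact traceless Γ hC (μ := 0) (ACm.mul_co (ACm.neg a04) (ACm.mul_ac a01 a03))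
    · exact traceless Γ hC (μ := 0) (ACm.mul_co (ACm.neg a04) (ACm.mul_ac a01 a04))
    · exact traceless Γ hC (μ := 0) (ACm.mul_co (ACm.neg a04) (ACm.mul_ac a02 a03))
    · exact traceless Γ hC (μ := 0) (ACm.mul_co (ACm.neg a04) (ACm.mul_ac a02 a04))
    · exact traceless Γ hC (μ := 0) (ACm.mul_co (ACm.neg a04) (ACm.mul_ac a03 a04))
    · exact traceless Γ hC (μ := 0) (ACm.mul_co (ACm.neg (ACm.mul_co a01 (COm.refl (Γ 0)))) (COm.one _))
    · exact traceless Γ hC (μ := 0) (ACm.mul_co (ACm.neg (ACm.mul_co a01 (COm.refl (Γ 0)))) (COm.refl (Γ 0)))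
    · exact traceless Γ hC (μ := 1) (ACm.mul_co (ACm.neg (COm.mul_ac (COm.refl (Γ 1)) a10)) (COm.refl (Γ 1)))
    · exact traceless Γ hC (μ := 3) (COm.mul_ac (COm.neg (ACm.mul_ac a31 a30)) a32)
    · exact traceless Γ hC (μ := 2) (COm.mul_ac (COm.neg (ACm.mul_ac a21 a20)) a23)
    · exact traceless Γ hC (μ := 2) (COm.mul_ac (COm.neg (ACm.mul_ac a21 a20)) a24)
    · exact absurd rfl hne
    · exact traceless Γ hC (μ := 1) (ACm.mul_co (ACm.neg (COm.mul_ac (COm.refl (Γ 1)) a10)) (ACm.mul_ac a10 a12))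
    · exact traceless Γ hC (μ := 1) (ACm.mul_co (ACm.neg (COm.mul_ac (COm.refl (Γ 1)) a10)) (ACm.mul_ac a10 a13))
    · exact traceless Γ hC (μ := 1) (ACm.mul_co (ACm.neg (COm.mul_ac (COm.refl (Γ 1)) a10)) (ACm.mul_ac a10 a14))
    · exact traceless Γ hC (μ := 0) (ACm.mul_co (ACm.neg (ACm.mul_co a01 (COm.refl (Γ 0)))) (ACm.mul_ac a01 a02))
    · exact traceless Γ hC (μ := 0) (ACm.mul_co (ACm.neg (ACm.mul_co a01 (COm.refl (Γ 0)))) (ACm.mul_ac a01 a03))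
    · exact traceless Γ hC (μ := 0) (ACm.mul_co (ACm.neg (ACm.mul_co a01 (COm.refl (Γ 0)))) (ACm.mul_ac a01 a04))
    · exact traceless Γ hC (μ := 0) (ACm.mul_co (ACm.neg (ACm.mul_co a01 (COm.refl (Γ 0)))) (ACm.mul_ac a02 a03))
    · exact traceless Γ hC (μ := 0) (ACm.mul_co (ACm.neg (ACm.mul_co a01 (COm.refl (Γ 0)))) (ACm.mul_ac a02 a04))
    · exact traceless Γ hC (μ := 0) (ACm.mul_co (ACm.neg (ACm.mul_co a01 (COm.refl (Γ 0)))) (ACm.mul_ac a03 a04))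
    · exact traceless Γ hC (μ := 0) (ACm.mul_co (ACm.neg (ACm.mul_co a02 (COm.refl (Γ 0)))) (COm.one _))
    · exact traceless Γ hC (μ := 0) (ACm.mul_co (ACm.neg (ACm.mul_co a02 (COm.refl (Γ 0)))) (COm.refl (Γ 0)))
    · exact traceless Γ hC (μ := 3) (COm.mul_ac (COm.neg (ACm.mul_ac a32 a30)) a31)
    · exact traceless Γ hC (μ := 1) (COm.mul_ac (COm.neg (ACm.mul_ac a12 a10)) a12)
    · exact traceless Γ hC (μ := 1) (COm.mul_ac (COm.neg (ACm.mul_ac a12 a10)) a13)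
    · exact traceless Γ hC (μ := 1) (COm.mul_ac (COm.neg (ACm.mul_ac a12 a10)) a14)
    · exact traceless Γ hC (μ := 1) (COm.mul_ac (COm.neg (ACm.mul_ac a12 a10)) (ACm.mul_co a10 (COm.refl (Γ 1))))
    · exact absurd rfl hne
    · exact traceless Γ hC (μ := 2) (ACm.mul_co (ACm.neg (COm.mul_ac (COm.refl (Γ 2)) a20)) (ACm.mul_ac a20 a23))
    · exact traceless Γ hC (μ := 2) (ACm.mul_co (ACm.neg (COm.mul_ac (COm.refl (Γ 2)) a20)) (ACm.mul_ac a20 a24))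
    · exact traceless Γ hC (μ := 0) (ACm.mul_co (ACm.neg (ACm.mul_co a02 (COm.refl (Γ 0)))) (ACm.mul_ac a01 a02))
    · exact traceless Γ hC (μ := 0) (ACm.mul_co (ACm.neg (ACm.mul_co a02 (COm.refl (Γ 0)))) (ACm.mul_ac a01 a03))
    · exact traceless Γ hC (μ := 0) (ACm.mul_co (ACm.neg (ACm.mul_co a02 (COm.refl (Γ 0)))) (ACm.mul_ac a01 a04))
    · exact traceless Γ hC (μ := 0) (ACm.mul_co (ACm.neg (ACm.mul_co a02 (COm.refl (Γ 0)))) (ACm.mul_ac a02 a03))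
    · exact traceless Γ hC (μ := 0) (ACm.mul_co (ACm.neg (ACm.mul_co a02 (COm.refl (Γ 0)))) (ACm.mul_ac a02 a04))
    · exact traceless Γ hC (μ := 0) (ACm.mul_co (ACm.neg (ACm.mul_co a02 (COm.refl (Γ 0)))) (ACm.mul_ac a03 a04))
    · exact traceless Γ hC (μ := 0) (ACm.mul_co (ACm.neg (ACm.mul_co a03 (COm.refl (Γ 0)))) (COm.one _))
    · exact traceless Γ hC (μ := 0) (ACm.mul_co (ACm.neg (ACm.mul_co a03 (COm.refl (Γ 0)))) (COm.refl (Γ 0)))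
    · exact traceless Γ hC (μ := 2) (COm.mul_ac (COm.neg (ACm.mul_ac a23 a20)) a21)
    · exact traceless Γ hC (μ := 1) (COm.mul_ac (COm.neg (ACm.mul_ac a13 a10)) a12)
    · exact traceless Γ hC (μ := 1) (COm.mul_ac (COm.neg (ACm.mul_ac a13 a10)) a13)
    · exact traceless Γ hC (μ := 1) (COm.mul_ac (COm.neg (ACm.mul_ac a13 a10)) a14)
    · exact traceless Γ hC (μ := 1) (COm.mul_ac (COm.neg (ACm.mul_ac a13 a10)) (ACm.mul_co a10 (COm.refl (Γ 1))))
    · exact traceless Γ hC (μ := 2) (COm.mul_ac (COm.neg (ACm.mul_ac a23 a20)) (ACm.mul_co a20 (COm.refl (Γ 2))))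
    · exact absurd rfl hne
    · exact traceless Γ hC (μ := 3) (ACm.mul_co (ACm.neg (COm.mul_ac (COm.refl (Γ 3)) a30)) (ACm.mul_ac a30 a34))
    · exact traceless Γ hC (μ := 0) (ACm.mul_co (ACm.neg (ACm.mul_co a03 (COm.refl (Γ 0)))) (ACm.mul_ac a01 a02))
    · exact traceless Γ hC (μ := 0) (ACm.mul_co (ACm.neg (ACm.mul_co a03 (COm.refl (Γ 0)))) (ACm.mul_ac a01 a03))
    · exact traceless Γ hC (μ := 0) (ACm.mul_co (ACm.neg (ACm.mul_co a03 (COm.refl (Γ 0)))) (ACm.mul_ac a01 a04))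
    · exact traceless Γ hC (μ := 0) (ACm.mul_co (ACm.neg (ACm.mul_co a03 (COm.refl (Γ 0)))) (ACm.mul_ac a02 a03))
    · exact traceless Γ hC (μ := 0) (ACm.mul_co (ACm.neg (ACm.mul_co a03 (COm.refl (Γ 0)))) (ACm.mul_ac a02 a04))
    · exact traceless Γ hC (μ := 0) (ACm.mul_co (ACm.neg (ACm.mul_co a03 (COm.refl (Γ 0)))) (ACm.mul_ac a03 a04))
    · exact traceless Γ hC (μ := 0) (ACm.mul_co (ACm.neg (ACm.mul_co a04 (COm.refl (Γ 0)))) (COm.one _))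
    · exact traceless Γ hC (μ := 0) (ACm.mul_co (ACm.neg (ACm.mul_co a04 (COm.refl (Γ 0)))) (COm.refl (Γ 0)))
    · exact traceless Γ hC (μ := 2) (COm.mul_ac (COm.neg (ACm.mul_ac a24 a20)) a21)
    · exact traceless Γ hC (μ := 1) (COm.mul_ac (COm.neg (ACm.mul_ac a14 a10)) a12)
    · exact traceless Γ hC (μ := 1) (COm.mul_ac (COm.neg (ACm.mul_ac a14 a10)) a13)
    · exact traceless Γ hC (μ := 1) (COm.mul_ac (COm.neg (ACm.mul_ac a14 a10)) a14)
    · exact traceless Γ hC (μ := 1) (COm.mul_ac (COm.neg (ACm.mul_ac a14 a10)) (ACm.mul_co a10 (COm.refl (Γ 1))))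
    · exact traceless Γ hC (μ := 2) (COm.mul_ac (COm.neg (ACm.mul_ac a24 a20)) (ACm.mul_co a20 (COm.refl (Γ 2))))
    · exact traceless Γ hC (μ := 3) (COm.mul_ac (COm.neg (ACm.mul_ac a34 a30)) (ACm.mul_co a30 (COm.refl (Γ 3))))
    · exact absurd rfl hne
    · exact traceless Γ hC (μ := 0) (ACm.mul_co (ACm.neg (ACm.mul_co a04 (COm.refl (Γ 0)))) (ACm.mul_ac a01 a02))
    · exact traceless Γ hC (μ := 0) (ACm.mul_co (ACm.neg (ACm.mul_co a04 (COm.refl (Γ 0)))) (ACm.mul_ac a01 a03))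
    · exact traceless Γ hC (μ := 0) (ACm.mul_co (ACm.neg (ACm.mul_co a04 (COm.refl (Γ 0)))) (ACm.mul_ac a01 a04))
    · exact traceless Γ hC (μ := 0) (ACm.mul_co (ACm.neg (ACm.mul_co a04 (COm.refl (Γ 0)))) (ACm.mul_ac a02 a03))
    · exact traceless Γ hC (μ := 0) (ACm.mul_co (ACm.neg (ACm.mul_co a04 (COm.refl (Γ 0)))) (ACm.mul_ac a02 a04))
    · exact traceless Γ hC (μ := 0) (ACm.mul_co (ACm.neg (ACm.mul_co a04 (COm.refl (Γ 0)))) (ACm.mul_ac a03 a04))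
    · exact traceless Γ hC (μ := 1) (ACm.mul_co (ACm.mul_co a12 (COm.refl (Γ 1))) (COm.one _))
    · exact traceless Γ hC (μ := 3) (COm.mul_ac (ACm.mul_ac a32 a31) a30)
    · exact traceless Γ hC (μ := 0) (COm.mul_ac (ACm.mul_ac a02 a01) a01)
    · exact traceless Γ hC (μ := 0) (COm.mul_ac (ACm.mul_ac a02 a01) a02)
    · exact traceless Γ hC (μ := 0) (COm.mul_ac (ACm.mul_ac a02 a01) a03)
    · exact traceless Γ hC (μ := 0) (COm.mul_ac (ACm.mul_ac a02 a01) a04)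
    · exact traceless Γ hC (μ := 0) (COm.mul_ac (ACm.mul_ac a02 a01) (COm.mul_ac (COm.refl (Γ 0)) a01))
    · exact traceless Γ hC (μ := 0) (COm.mul_ac (ACm.mul_ac a02 a01) (COm.mul_ac (COm.refl (Γ 0)) a02))
    · exact traceless Γ hC (μ := 0) (COm.mul_ac (ACm.mul_ac a02 a01) (COm.mul_ac (COm.refl (Γ 0)) a03))
    · exact traceless Γ hC (μ := 0) (COm.mul_ac (ACm.mul_ac a02 a01) (COm.mul_ac (COm.refl (Γ 0)) a04))
    · exact absurd rfl hne
    · exact traceless Γ hC (μ := 2) (ACm.mul_co (COm.mul_ac (COm.refl (Γ 2)) a21) (ACm.mul_ac a21 a23))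
    · exact traceless Γ hC (μ := 2) (ACm.mul_co (COm.mul_ac (COm.refl (Γ 2)) a21) (ACm.mul_ac a21 a24))
    · exact traceless Γ hC (μ := 1) (ACm.mul_co (ACm.mul_co a12 (COm.refl (Γ 1))) (ACm.mul_ac a12 a13))
    · exact traceless Γ hC (μ := 1) (ACm.mul_co (ACm.mul_co a12 (COm.refl (Γ 1))) (ACm.mul_ac a12 a14))
    · exact traceless Γ hC (μ := 1) (ACm.mul_co (ACm.mul_co a12 (COm.refl (Γ 1))) (ACm.mul_ac a13 a14))
    · exact traceless Γ hC (μ := 1) (ACm.mul_co (ACm.mul_co a13 (COm.refl (Γ 1))) (COm.one _))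
    · exact traceless Γ hC (μ := 2) (COm.mul_ac (ACm.mul_ac a23 a21) a20)
    · exact traceless Γ hC (μ := 0) (COm.mul_ac (ACm.mul_ac a03 a01) a01)
    · exact traceless Γ hC (μ := 0) (COm.mul_ac (ACm.mul_ac a03 a01) a02)
    · exact traceless Γ hC (μ := 0) (COm.mul_ac (ACm.mul_ac a03 a01) a03)
    · exact traceless Γ hC (μ := 0) (COm.mul_ac (ACm.mul_ac a03 a01) a04)
    · exact traceless Γ hC (μ := 0) (COm.mul_ac (ACm.mul_ac a03 a01) (COm.mul_ac (COm.refl (Γ 0)) a01))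
    · exact traceless Γ hC (μ := 0) (COm.mul_ac (ACm.mul_ac a03 a01) (COm.mul_ac (COm.refl (Γ 0)) a02))
    · exact traceless Γ hC (μ := 0) (COm.mul_ac (ACm.mul_ac a03 a01) (COm.mul_ac (COm.refl (Γ 0)) a03))
    · exact traceless Γ hC (μ := 0) (COm.mul_ac (ACm.mul_ac a03 a01) (COm.mul_ac (COm.refl (Γ 0)) a04))
    · exact traceless Γ hC (μ := 2) (COm.mul_ac (ACm.mul_ac a23 a21) (ACm.mul_co a21 (COm.refl (Γ 2))))
    · exact absurd rfl hne
    · exact traceless Γ hC (μ := 3) (ACm.mul_co (COm.mul_ac (COm.refl (Γ 3)) a31) (ACm.mul_ac a31 a34))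
    · exact traceless Γ hC (μ := 1) (ACm.mul_co (ACm.mul_co a13 (COm.refl (Γ 1))) (ACm.mul_ac a12 a13))
    · exact traceless Γ hC (μ := 1) (ACm.mul_co (ACm.mul_co a13 (COm.refl (Γ 1))) (ACm.mul_ac a12 a14))
    · exact traceless Γ hC (μ := 1) (ACm.mul_co (ACm.mul_co a13 (COm.refl (Γ 1))) (ACm.mul_ac a13 a14))
    · exact traceless Γ hC (μ := 1) (ACm.mul_co (ACm.mul_co a14 (COm.refl (Γ 1))) (COm.one _))
    · exact traceless Γ hC (μ := 2) (COm.mul_ac (ACm.mul_ac a24 a21) a20)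
    · exact traceless Γ hC (μ := 0) (COm.mul_ac (ACm.mul_ac a04 a01) a01)
    · exact traceless Γ hC (μ := 0) (COm.mul_ac (ACm.mul_ac a04 a01) a02)
    · exact traceless Γ hC (μ := 0) (COm.mul_ac (ACm.mul_ac a04 a01) a03)
    · exact traceless Γ hC (μ := 0) (COm.mul_ac (ACm.mul_ac a04 a01) a04)
    · exact traceless Γ hC (μ := 0) (COm.mul_ac (ACm.mul_ac a04 a01) (COm.mul_ac (COm.refl (Γ 0)) a01))
    · exact traceless Γ hC (μ := 0) (COm.mul_ac (ACm.mul_ac a04 a01) (COm.mul_ac (COm.refl (Γ 0)) a02))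
    · exact traceless Γ hC (μ := 0) (COm.mul_ac (ACm.mul_ac a04 a01) (COm.mul_ac (COm.refl (Γ 0)) a03))
    · exact traceless Γ hC (μ := 0) (COm.mul_ac (ACm.mul_ac a04 a01) (COm.mul_ac (COm.refl (Γ 0)) a04))
    · exact traceless Γ hC (μ := 2) (COm.mul_ac (ACm.mul_ac a24 a21) (ACm.mul_co a21 (COm.refl (Γ 2))))
    · exact traceless Γ hC (μ := 3) (COm.mul_ac (ACm.mul_ac a34 a31) (ACm.mul_co a31 (COm.refl (Γ 3))))
    · exact absurd rfl hne
    · exact traceless Γ hC (μ := 1) (ACm.mul_co (ACm.mul_co a14 (COm.refl (Γ 1))) (ACm.mul_ac a12 a13))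
    · exact traceless Γ hC (μ := 1) (ACm.mul_co (ACm.mul_co a14 (COm.refl (Γ 1))) (ACm.mul_ac a12 a14))
    · exact traceless Γ hC (μ := 1) (ACm.mul_co (ACm.mul_co a14 (COm.refl (Γ 1))) (ACm.mul_ac a13 a14))
    · exact traceless Γ hC (μ := 2) (ACm.mul_co (ACm.mul_co a23 (COm.refl (Γ 2))) (COm.one _))
    · exact traceless Γ hC (μ := 1) (COm.mul_ac (ACm.mul_ac a13 a12) a10)
    · exact traceless Γ hC (μ := 0) (COm.mul_ac (ACm.mul_ac a03 a02) a01)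
    · exact traceless Γ hC (μ := 0) (COm.mul_ac (ACm.mul_ac a03 a02) a02)
    · exact traceless Γ hC (μ := 0) (COm.mul_ac (ACm.mul_ac a03 a02) a03)
    · exact traceless Γ hC (μ := 0) (COm.mul_ac (ACm.mul_ac a03 a02) a04)
    · exact traceless Γ hC (μ := 0) (COm.mul_ac (ACm.mul_ac a03 a02) (COm.mul_ac (COm.refl (Γ 0)) a01))
    · exact traceless Γ hC (μ := 0) (COm.mul_ac (ACm.mul_ac a03 a02) (COm.mul_ac (COm.refl (Γ 0)) a02))
    · exact traceless Γ hC (μ := 0) (COm.mul_ac (ACm.mul_ac a03 a02) (COm.mul_ac (COm.refl (Γ 0)) a03))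
    · exact traceless Γ hC (μ := 0) (COm.mul_ac (ACm.mul_ac a03 a02) (COm.mul_ac (COm.refl (Γ 0)) a04))
    · exact traceless Γ hC (μ := 1) (COm.mul_ac (ACm.mul_ac a13 a12) (COm.mul_ac (COm.refl (Γ 1)) a12))
    · exact traceless Γ hC (μ := 1) (COm.mul_ac (ACm.mul_ac a13 a12) (COm.mul_ac (COm.refl (Γ 1)) a13))
    · exact traceless Γ hC (μ := 1) (COm.mul_ac (ACm.mul_ac a13 a12) (COm.mul_ac (COm.refl (Γ 1)) a14))
    · exact absurd rfl hne
    · exact traceless Γ hC (μ := 3) (ACm.mul_co (COm.mul_ac (COm.refl (Γ 3)) a32) (ACm.mul_ac a32 a34))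
    · exact traceless Γ hC (μ := 2) (ACm.mul_co (ACm.mul_co a23 (COm.refl (Γ 2))) (ACm.mul_ac a23 a24))
    · exact traceless Γ hC (μ := 2) (ACm.mul_co (ACm.mul_co a24 (COm.refl (Γ 2))) (COm.one _))
    · exact traceless Γ hC (μ := 1) (COm.mul_ac (ACm.mul_ac a14 a12) a10)
    · exact traceless Γ hC (μ := 0) (COm.mul_ac (ACm.mul_ac a04 a02) a01)
    · exact traceless Γ hC (μ := 0) (COm.mul_ac (ACm.mul_ac a04 a02) a02)
    · exact traceless Γ hC (μ := 0) (COm.mul_ac (ACm.mul_ac a04 a02) a03)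
    · exact traceless Γ hC (μ := 0) (COm.mul_ac (ACm.mul_ac a04 a02) a04)
    · exact traceless Γ hC (μ := 0) (COm.mul_ac (ACm.mul_ac a04 a02) (COm.mul_ac (COm.refl (Γ 0)) a01))
    · exact traceless Γ hC (μ := 0) (COm.mul_ac (ACm.mul_ac a04 a02) (COm.mul_ac (COm.refl (Γ 0)) a02))
    · exact traceless Γ hC (μ := 0) (COm.mul_ac (ACm.mul_ac a04 a02) (COm.mul_ac (COm.refl (Γ 0)) a03))
    · exact traceless Γ hC (μ := 0) (COm.mul_ac (ACm.mul_ac a04 a02) (COm.mul_ac (COm.refl (Γ 0)) a04))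
    · exact traceless Γ hC (μ := 1) (COm.mul_ac (ACm.mul_ac a14 a12) (COm.mul_ac (COm.refl (Γ 1)) a12))
    · exact traceless Γ hC (μ := 1) (COm.mul_ac (ACm.mul_ac a14 a12) (COm.mul_ac (COm.refl (Γ 1)) a13))
    · exact traceless Γ hC (μ := 1) (COm.mul_ac (ACm.mul_ac a14 a12) (COm.mul_ac (COm.refl (Γ 1)) a14))
    · exact traceless Γ hC (μ := 3) (COm.mul_ac (ACm.mul_ac a34 a32) (ACm.mul_co a32 (COm.refl (Γ 3))))
    · exact absurd rfl hne
    · exact traceless Γ hC (μ := 2) (ACm.mul_co (ACm.mul_co a24 (COm.refl (Γ 2))) (ACm.mul_ac a23 a24))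
    · exact traceless Γ hC (μ := 3) (ACm.mul_co (ACm.mul_co a34 (COm.refl (Γ 3))) (COm.one _))
    · exact traceless Γ hC (μ := 1) (COm.mul_ac (ACm.mul_ac a14 a13) a10)
    · exact traceless Γ hC (μ := 0) (COm.mul_ac (ACm.mul_ac a04 a03) a01)
    · exact traceless Γ hC (μ := 0) (COm.mul_ac (ACm.mul_ac a04 a03) a02)
    · exact traceless Γ hC (μ := 0) (COm.mul_ac (ACm.mul_ac a04 a03) a03)
    · exact traceless Γ hC (μ := 0) (COm.mul_ac (ACm.mul_ac a04 a03) a04)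
    · exact traceless Γ hC (μ := 0) (COm.mul_ac (ACm.mul_ac a04 a03) (COm.mul_ac (COm.refl (Γ 0)) a01))
    · exact traceless Γ hC (μ := 0) (COm.mul_ac (ACm.mul_ac a04 a03) (COm.mul_ac (COm.refl (Γ 0)) a02))
    · exact traceless Γ hC (μ := 0) (COm.mul_ac (ACm.mul_ac a04 a03) (COm.mul_ac (COm.refl (Γ 0)) a03))
    · exact traceless Γ hC (μ := 0) (COm.mul_ac (ACm.mul_ac a04 a03) (COm.mul_ac (COm.refl (Γ 0)) a04))
    · exact traceless Γ hC (μ := 1) (COm.mul_ac (ACm.mul_ac a14 a13) (COm.mul_ac (COm.refl (Γ 1)) a12))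
    · exact traceless Γ hC (μ := 1) (COm.mul_ac (ACm.mul_ac a14 a13) (COm.mul_ac (COm.refl (Γ 1)) a13))
    · exact traceless Γ hC (μ := 1) (COm.mul_ac (ACm.mul_ac a14 a13) (COm.mul_ac (COm.refl (Γ 1)) a14))
    · exact traceless Γ hC (μ := 2) (COm.mul_ac (ACm.mul_ac a24 a23) (COm.mul_ac (COm.refl (Γ 2)) a23))
    · exact traceless Γ hC (μ := 2) (COm.mul_ac (ACm.mul_ac a24 a23) (COm.mul_ac (COm.refl (Γ 2)) a24))
    · exact absurd rfl hne

lemma basis_indep : LinearIndependent ℂ (bas Γ) := by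
  rw [Fintype.linearIndependent_iff]
  intro g hg j
  have h := congrArg (fun M => trace (dua Γ j * M)) hg
  simp only [Matrix.mul_sum, Matrix.mul_smul, trace_sum, trace_smul, Matrix.mul_zero,
    trace_zero, smul_eq_mul] at h
  have h2 : ∑ i, g i * (if j = i then (4:ℂ) else 0) = 0 :=
    (Finset.sum_congr rfl fun i _ => by rw [orth Γ hC j i]).trans h
  simp only [mul_ite, mul_zero, Finset.sum_ite_eq, Finset.mem_univ, if_true] at h2
  have h4 : (4:ℂ) ≠ 0 := by norm_num
  exact (mul_eq_zero.mp h2).resolve_right h4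

lemma expand (M : Mx) :
    M = ∑ i, ((1/4 : ℂ) * trace (dua Γ i * M)) • bas Γ i := by
  have hcard : Fintype.card (Fin 16) = Module.finrank ℂ Mx := by
    simp [Module.finrank_matrix]
  let B : Module.Basis (Fin 16) ℂ Mx :=
    basisOfLinearIndependentOfCardEqFinrank (basis_indep Γ hC) hcard
  have hB : ⇑B = bas Γ := coe_basisOfLinearIndependentOfCardEqFinrank _ _
  have hrep : ∑ i, B.repr M i • bas Γ i = M := by rw [← hB]; exact B.sum_repr M
  have hc : ∀ j, trace (dua Γ j * M) = 4 * B.repr M j := by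
    intro j
    conv_lhs => rw [← hrep]
    simp only [Matrix.mul_sum, Matrix.mul_smul, trace_sum, trace_smul, smul_eq_mul]
    have : ∀ i ∈ Finset.univ, B.repr M i * trace (dua Γ j * bas Γ i)
        = B.repr M i * (if j = i then 4 else 0) := fun i _ => by rw [orth Γ hC j i]
    rw [Finset.sum_congr rfl this]
    simp only [mul_ite, mul_zero, Finset.sum_ite_eq, Finset.mem_univ, if_true]
    ring
  conv_lhs => rw [← hrep]
  refine Finset.sum_congr rfl fun i _ => ?_
  rw [hc i]
  congr 1
  ring


end withGamma

lemma trace_mul_vecMulVec (X : Mx) (u v : Fin 4 → ℂ) :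
    trace (X * vecMulVec u v) = v ⬝ᵥ (X *ᵥ u) := by
  simp only [Matrix.trace, Matrix.diag, Matrix.mul_apply, Matrix.vecMulVec_apply,
    dotProduct, Matrix.mulVec, Finset.mul_sum]
  exact Finset.sum_congr rfl fun i _ => Finset.sum_congr rfl fun j _ => by ring

lemma dot_swap (N : Mx) (v w : Fin 4 → ℂ) : v ⬝ᵥ N *ᵥ w = w ⬝ᵥ Nᵀ *ᵥ v := by
  conv_rhs => rw [Matrix.dotProduct_mulVec, Matrix.vecMul_transpose, dotProduct_comm]

lemma vecMulVec_mulVec' (u v x : Fin 4 → ℂ) :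
    vecMulVec u v *ᵥ x = (v ⬝ᵥ x) • u := by
  funext i
  simp only [Matrix.mulVec, Matrix.vecMulVec_apply, dotProduct, Pi.smul_apply,
    smul_eq_mul, Finset.mul_sum, Finset.sum_mul]
  exact Finset.sum_congr rfl fun j _ => by ring

lemma bilM_one (Cm : Mx) (v w : Fin 4 → ℂ) : bilM Cm 1 v w = bil Cm v w := by
  unfold bilM bil
  rw [Matrix.one_mulVec]

lemma bilM_neg (Cm D : Mx) (v w : Fin 4 → ℂ) : bilM Cm (-D) v w = -(bilM Cm D v w) := by
  unfold bilM
  rw [Matrix.neg_mulVec, Matrix.mulVec_neg, dotProduct_neg]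

lemma bilM_eq_dot (Cm D : Mx) (v w : Fin 4 → ℂ) : bilM Cm D v w = v ⬝ᵥ (Cm * D) *ᵥ w := by
  unfold bilM
  rw [← Matrix.mulVec_mulVec]

lemma bilM_swap_symm (Cm D : Mx) (hD : (Cm * D)ᵀ = Cm * D) (v w : Fin 4 → ℂ) :
    bilM Cm D v w = bilM Cm D w v := by
  rw [bilM_eq_dot, bilM_eq_dot, dot_swap, hD]

/-- Clifford multiplication by the Dirac current: Σ_μ κ_{s,μ} Γ^μ sᴬ = μ_s sᴬ. -/
theorem dirac_current_action (Γ : Fin 5 → Matrix (Fin 4) (Fin 4) ℂ)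
    (Cm : Matrix (Fin 4) (Fin 4) ℂ)
    (hC : ∀ μ ν, Γ μ * Γ ν + Γ ν * Γ μ = (2 * eta μ ν) • (1 : Matrix (Fin 4) (Fin 4) ℂ))
    (hvol : Γ 0 * Γ 1 * Γ 2 * Γ 3 * Γ 4 = 1)
    (hCt : Cmᵀ = -Cm)
    (hCΓ : ∀ μ, Cm * Γ μ = (Γ μ)ᵀ * Cm)
    (s : Fin 2 → Fin 4 → ℂ) (A : Fin 2) :
    ∑ μ, (kappaLow Γ Cm s μ * eta μ μ) • (Γ μ *ᵥ s A) = muS Cm s • s A := by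
  classical
  have d0 : dua Γ 0 = 1 := rfl
  have d1 : dua Γ 1 = Γ 0 := rfl
  have d2 : dua Γ 2 = -Γ 1 := rfl
  have d3 : dua Γ 3 = -Γ 2 := rfl
  have d4 : dua Γ 4 = -Γ 3 := rfl
  have d5 : dua Γ 5 = -Γ 4 := rfl
  have d6 : dua Γ 6 = -(Γ 1 * Γ 0) := rfl
  have d7 : dua Γ 7 = -(Γ 2 * Γ 0) := rfl
  have d8 : dua Γ 8 = -(Γ 3 * Γ 0) := rfl
  have d9 : dua Γ 9 = -(Γ 4 * Γ 0) := rfl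
  have d10 : dua Γ 10 = Γ 2 * Γ 1 := rfl
  have d11 : dua Γ 11 = Γ 3 * Γ 1 := rfl
  have d12 : dua Γ 12 = Γ 4 * Γ 1 := rfl
  have d13 : dua Γ 13 = Γ 3 * Γ 2 := rfl
  have d14 : dua Γ 14 = Γ 4 * Γ 2 := rfl
  have d15 : dua Γ 15 = Γ 4 * Γ 3 := rfl
  have b0 : bas Γ 0 = 1 := rfl
  have b1 : bas Γ 1 = Γ 0 := rfl
  have b2 : bas Γ 2 = Γ 1 := rfl
  have b3 : bas Γ 3 = Γ 2 := rfl
  have b4 : bas Γ 4 = Γ 3 := rfl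
  have b5 : bas Γ 5 = Γ 4 := rfl
  have he0 : eta 0 0 = 1 := by simp [eta]
  have he1 : eta 1 1 = -1 := by simp [eta]
  have he2 : eta 2 2 = -1 := by simp [eta]
  have he3 : eta 3 3 = -1 := by simp [eta]
  have he4 : eta 4 4 = -1 := by simp [eta]
  -- symmetry of Cm * (Γ μ * Γ ν) for μ ≠ ν
  have hsym2 : ∀ μ ν, μ ≠ ν → (Cm * (Γ μ * Γ ν))ᵀ = Cm * (Γ μ * Γ ν) := by
    intro μ ν hμν
    have hanti : Γ ν * Γ μ = -(Γ μ * Γ ν) := ganti Γ hC (Ne.symm hμν)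
    conv_lhs => rw [Matrix.transpose_mul, Matrix.transpose_mul, hCt, Matrix.mul_neg,
      mul_assoc, ← hCΓ μ, ← mul_assoc, ← hCΓ ν, mul_assoc, hanti, Matrix.mul_neg, neg_neg]
  -- the rank-one comparison matrix
  set Mm : Mx := vecMulVec (s 1) (vecMul (s 0) Cm) - vecMulVec (s 0) (vecMul (s 1) Cm)
    with hMm
  have htr : ∀ D : Mx, trace (D * Mm) = bilM Cm D (s 0) (s 1) - bilM Cm D (s 1) (s 0) := by
    intro D
    rw [hMm, Matrix.mul_sub, trace_sub, trace_mul_vecMulVec, trace_mul_vecMulVec]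
    unfold bilM
    rw [Matrix.dotProduct_mulVec (s 0) Cm (D *ᵥ s 1),
      Matrix.dotProduct_mulVec (s 1) Cm (D *ᵥ s 0)]
  have hz : ∀ D : Mx, (Cm * D)ᵀ = Cm * D → trace (D * Mm) = 0 := by
    intro D hD
    rw [htr D, bilM_swap_symm Cm D hD (s 0) (s 1), sub_self]
  have hzneg : ∀ D : Mx, (Cm * D)ᵀ = Cm * D → trace ((-D) * Mm) = 0 := by
    intro D hD
    rw [Matrix.neg_mul, trace_neg, hz D hD, neg_zero]
  -- scalar reductions of the eps-contracted bilinears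
  have hmu : muS Cm s = bil Cm (s 0) (s 1) - bil Cm (s 1) (s 0) := by
    simp only [muS, Fin.sum_univ_two, eps2]
    norm_num
    ring
  have hkL : ∀ μ, kappaLow Γ Cm s μ
      = bilM Cm (Γ μ) (s 0) (s 1) - bilM Cm (Γ μ) (s 1) (s 0) := by
    intro μ
    simp only [kappaLow, Fin.sum_univ_two, eps2]
    norm_num
    ring
  -- the sixteen coefficients
  have hτ0 : trace (dua Γ 0 * Mm) = muS Cm s := by
    rw [d0, htr 1, bilM_one, bilM_one, hmu]
  have hτ1 : trace (dua Γ 1 * Mm) = kappaLow Γ Cm s 0 * eta 0 0 := by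
    rw [d1, htr (Γ 0), hkL 0, he0, mul_one]
  have hτ2 : trace (dua Γ 2 * Mm) = kappaLow Γ Cm s 1 * eta 1 1 := by
    rw [d2, htr (-Γ 1), bilM_neg, bilM_neg, hkL 1, he1]; ring
  have hτ3 : trace (dua Γ 3 * Mm) = kappaLow Γ Cm s 2 * eta 2 2 := by
    rw [d3, htr (-Γ 2), bilM_neg, bilM_neg, hkL 2, he2]; ring
  have hτ4 : trace (dua Γ 4 * Mm) = kappaLow Γ Cm s 3 * eta 3 3 := by
    rw [d4, htr (-Γ 3), bilM_neg, bilM_neg, hkL 3, he3]; ring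
  have hτ5 : trace (dua Γ 5 * Mm) = kappaLow Γ Cm s 4 * eta 4 4 := by
    rw [d5, htr (-Γ 4), bilM_neg, bilM_neg, hkL 4, he4]; ring
  have hτ6 : trace (dua Γ 6 * Mm) = 0 := by
    rw [d6]; exact hzneg _ (hsym2 1 0 (by decide))
  have hτ7 : trace (dua Γ 7 * Mm) = 0 := by
    rw [d7]; exact hzneg _ (hsym2 2 0 (by decide))
  have hτ8 : trace (dua Γ 8 * Mm) = 0 := by
    rw [d8]; exact hzneg _ (hsym2 3 0 (by decide))
  have hτ9 : trace (dua Γ 9 * Mm) = 0 := by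
    rw [d9]; exact hzneg _ (hsym2 4 0 (by decide))
  have hτ10 : trace (dua Γ 10 * Mm) = 0 := by
    rw [d10]; exact hz _ (hsym2 2 1 (by decide))
  have hτ11 : trace (dua Γ 11 * Mm) = 0 := by
    rw [d11]; exact hz _ (hsym2 3 1 (by decide))
  have hτ12 : trace (dua Γ 12 * Mm) = 0 := by
    rw [d12]; exact hz _ (hsym2 4 1 (by decide))
  have hτ13 : trace (dua Γ 13 * Mm) = 0 := by
    rw [d13]; exact hz _ (hsym2 3 2 (by decide))
  have hτ14 : trace (dua Γ 14 * Mm) = 0 := by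
    rw [d14]; exact hz _ (hsym2 4 2 (by decide))
  have hτ15 : trace (dua Γ 15 * Mm) = 0 := by
    rw [d15]; exact hz _ (hsym2 4 3 (by decide))
  -- the Fierz expansion of Mm
  have hex := expand Γ hC Mm
  rw [sum16 (fun i => ((1/4 : ℂ) * trace (dua Γ i * Mm)) • bas Γ i)] at hex
  rw [hτ0, hτ1, hτ2, hτ3, hτ4, hτ5, hτ6, hτ7, hτ8, hτ9, hτ10, hτ11, hτ12, hτ13, hτ14,
    hτ15, b0, b1, b2, b3, b4, b5] at hex
  simp only [mul_zero, zero_smul, add_zero] at hex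
  -- antisymmetry facts for bil
  have hbilvv : ∀ v, bil Cm v v = 0 := by
    intro v
    have h1 : bil Cm v v = -bil Cm v v := by
      conv_lhs => rw [bil, dot_swap, hCt, Matrix.neg_mulVec, dotProduct_neg]
      rfl
    linear_combination (1/2 : ℂ) * h1
  have hbilswap : bil Cm (s 1) (s 0) = -bil Cm (s 0) (s 1) := by
    conv_lhs => rw [bil, dot_swap, hCt, Matrix.neg_mulVec, dotProduct_neg]
    rfl
  -- the action of Mm on the spinors
  have hMv : ∀ B : Fin 2, Mm *ᵥ s B = ((1/2) * muS Cm s) • s B := by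
    intro B
    rw [hMm, Matrix.sub_mulVec, vecMulVec_mulVec', vecMulVec_mulVec']
    have hd0 : vecMul (s 0) Cm ⬝ᵥ s B = bil Cm (s 0) (s B) := by
      rw [bil, Matrix.dotProduct_mulVec]
    have hd1 : vecMul (s 1) Cm ⬝ᵥ s B = bil Cm (s 1) (s B) := by
      rw [bil, Matrix.dotProduct_mulVec]
    rw [hd0, hd1, hmu]
    fin_cases B
    · show bil Cm (s 0) (s 0) • s 1 - bil Cm (s 1) (s 0) • s 0
        = ((1/2) * (bil Cm (s 0) (s 1) - bil Cm (s 1) (s 0))) • s 0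
      rw [hbilvv (s 0), hbilswap]
      module
    · show bil Cm (s 0) (s 1) • s 1 - bil Cm (s 1) (s 1) • s 0
        = ((1/2) * (bil Cm (s 0) (s 1) - bil Cm (s 1) (s 0))) • s 1
      rw [hbilvv (s 1), hbilswap]
      module
  have happ := congrArg (fun X : Mx => X *ᵥ s A) hex
  simp only [Matrix.add_mulVec, Matrix.smul_mulVec, Matrix.one_mulVec] at happ
  rw [hMv A] at happ
  rw [Fin.sum_univ_five]
  linear_combination (norm := module) (-4:ℂ) • happ
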